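/- Transport for swap: let y ∈ G(u,u) and z ∈ G(v,v) be endomorphisms in a Garside groupoid conjugate by a positive morphism α ∈ C(u,v), so y^α = z. Writing reduced left-fraction decompositions y = f⁻¹g and z = h⁻¹k, the transport α^(1) := fαh⁻¹ satisfies α^(1) = fαh⁻¹ = gαk⁻¹ = fα ∧ gα, and sw(y)^{α^(1)} = sw(z). -/

import Mathlib

open CategoryTheory

/-- A (homogeneous) Garside groupoid: the enveloping groupoid `G` of a Garside category
`(C, φ, Δ)` with finitely many simple morphisms.  `Pos` is the predicate of being a
positive morphism (i.e. lying in `C`), `Simple` the predicate of being simple, every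
morphism has a (reduced) left-fraction decomposition `x = (fracDen x)⁻¹ ≫ fracNum x`,
morphisms with a common source have a left gcd `meet` and a right lcm `join`, and `φ`
is the Garside automorphism. -/
structure GarsideGroupoid where
  Obj : Type*
  [grpd : Groupoid Obj]
  Pos : ∀ {a b : Obj}, (a ⟶ b) → Prop
  pos_id : ∀ a : Obj, Pos (𝟙 a)
  pos_comp : ∀ {a b c : Obj} (f : a ⟶ b) (g : b ⟶ c), Pos f → Pos g → Pos (f ≫ g)
  Simple : ∀ {a b : Obj}, (a ⟶ b) → Prop
  simple_pos : ∀ {a b : Obj} (f : a ⟶ b), Simple f → Pos f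
  finiteSimples : Finite ((a : Obj) × (b : Obj) × {f : a ⟶ b // Simple f})
  fracObj : ∀ {a b : Obj}, (a ⟶ b) → Obj
  fracDen : ∀ {a b : Obj} (x : a ⟶ b), fracObj x ⟶ a
  fracNum : ∀ {a b : Obj} (x : a ⟶ b), fracObj x ⟶ b
  fracDen_pos : ∀ {a b : Obj} (x : a ⟶ b), Pos (fracDen x)
  fracNum_pos : ∀ {a b : Obj} (x : a ⟶ b), Pos (fracNum x)
  frac_spec : ∀ {a b : Obj} (x : a ⟶ b), x = Groupoid.inv (fracDen x) ≫ fracNum x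
  meetObj : ∀ {u a b : Obj}, (u ⟶ a) → (u ⟶ b) → Obj
  meet : ∀ {u a b : Obj} (f : u ⟶ a) (g : u ⟶ b), u ⟶ meetObj f g
  meet_le_left : ∀ {u a b : Obj} (f : u ⟶ a) (g : u ⟶ b), Pos (Groupoid.inv (meet f g) ≫ f)
  meet_le_right : ∀ {u a b : Obj} (f : u ⟶ a) (g : u ⟶ b), Pos (Groupoid.inv (meet f g) ≫ g)
  le_meet : ∀ {u a b d : Obj} (f : u ⟶ a) (g : u ⟶ b) (h : u ⟶ d),
    Pos (Groupoid.inv h ≫ f) → Pos (Groupoid.inv h ≫ g) → Pos (Groupoid.inv h ≫ meet f g)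
  frac_reduced : ∀ {a b : Obj} (x : a ⟶ b), Pos (Groupoid.inv (meet (fracDen x) (fracNum x)))
  joinObj : ∀ {u a b : Obj}, (u ⟶ a) → (u ⟶ b) → Obj
  join : ∀ {u a b : Obj} (f : u ⟶ a) (g : u ⟶ b), u ⟶ joinObj f g
  le_join_left : ∀ {u a b : Obj} (f : u ⟶ a) (g : u ⟶ b), Pos (Groupoid.inv f ≫ join f g)
  le_join_right : ∀ {u a b : Obj} (f : u ⟶ a) (g : u ⟶ b), Pos (Groupoid.inv g ≫ join f g)
  join_le : ∀ {u a b d : Obj} (f : u ⟶ a) (g : u ⟶ b) (h : u ⟶ d),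
    Pos (Groupoid.inv f ≫ h) → Pos (Groupoid.inv g ≫ h) → Pos (Groupoid.inv (join f g) ≫ h)
  phi : Obj → Obj
  phiMap : ∀ {a b : Obj}, (a ⟶ b) → (phi a ⟶ phi b)
  phiMap_id : ∀ a : Obj, phiMap (𝟙 a) = 𝟙 (phi a)
  phiMap_comp : ∀ {a b c : Obj} (f : a ⟶ b) (g : b ⟶ c), phiMap (f ≫ g) = phiMap f ≫ phiMap g
  phi_pos : ∀ {a b : Obj} (f : a ⟶ b), Pos f → Pos (phiMap f)
  phi_bij : Function.Bijective phi

attribute [instance] GarsideGroupoid.grpd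

namespace GarsideGroupoid

variable (G : GarsideGroupoid)

/-- The endomorphisms of the groupoid, at varying objects. -/
def Endo := (u : G.Obj) × (u ⟶ u)

/-- The (left) swap function, sending an endomorphism `x = f⁻¹ ≫ g` (reduced left fraction)
to `g ≫ f⁻¹`. -/
def sw (x : G.Endo) : G.Endo :=
  ⟨G.fracObj x.2, G.fracNum x.2 ≫ Groupoid.inv (G.fracDen x.2)⟩

/-- An endomorphism is recurrent for swap if it is a fixed point of a positive power of `sw`. -/
def Recurrent (x : G.Endo) : Prop := ∃ m : ℕ, 0 < m ∧ G.sw^[m] x = x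

/-- The prefix order on morphisms with common source: `f ≼ g` iff `f⁻¹ ≫ g` is positive. -/
def Le {u a b : G.Obj} (f : u ⟶ a) (g : u ⟶ b) : Prop := G.Pos (Groupoid.inv f ≫ g)

/-- Conjugation of an endomorphism `x` at `u` by a morphism `α : u ⟶ v`. -/
def conjEnd {u v : G.Obj} (x : u ⟶ u) (α : u ⟶ v) : G.Endo :=
  ⟨v, Groupoid.inv α ≫ x ≫ α⟩

/-- Two endomorphisms are conjugate in the groupoid. -/
def ConjTo (x y : G.Endo) : Prop :=
  ∃ α : x.1 ⟶ y.1, Groupoid.inv α ≫ x.2 ≫ α = y.2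

end GarsideGroupoid

/-- The swap of an endomorphism `x = f⁻¹ ≫ g`, as a morphism `g ≫ f⁻¹` at the object which is
the common source of the reduced left fraction of `x`. -/
def GarsideGroupoid.swMor (G : GarsideGroupoid) {u : G.Obj} (x : u ⟶ u) :
    G.fracObj x ⟶ G.fracObj x :=
  G.fracNum x ≫ Groupoid.inv (G.fracDen x)

/-!
Write `y = f⁻¹g`, `z = h⁻¹k` and `β = fαh⁻¹`. Since `y^α = z`, both `βh = fα` and `βk = gα`, so
`β` is a common prefix of `fα` and `gα`. Conversely `β⁻¹(fα ∧ gα)` is a common prefix of `h` and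
`k`, hence of `h ∧ k`, which is trivial because the fraction `h⁻¹k` is reduced; so `fα ∧ gα ≼ β`.
The conjugation of the swaps is then the computation `β⁻¹(gf⁻¹)β = β⁻¹gαh⁻¹ = β⁻¹βkh⁻¹ = kh⁻¹`.
-/

namespace GarsideGroupoid

variable {G : GarsideGroupoid}

theorem le_trans {u a b c : G.Obj} {f : u ⟶ a} {g : u ⟶ b} {h : u ⟶ c}
    (hfg : G.Le f g) (hgh : G.Le g h) : G.Le f h := by
  simpa [Le] using G.pos_comp _ _ hfg hgh

theorem comp_le_comp_iff {w u a b : G.Obj} (c : w ⟶ u) (f : u ⟶ a) (g : u ⟶ b) :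
    G.Le (c ≫ f) (c ≫ g) ↔ G.Le f g := by
  simp [Le, Groupoid.inv_eq_inv]

theorem le_self_comp_iff {u a b : G.Obj} (f : u ⟶ a) (g : a ⟶ b) : G.Le f (f ≫ g) ↔ G.Pos g := by
  simp [Le]

theorem le_meet_iff {u a b d : G.Obj} (h : u ⟶ d) (f : u ⟶ a) (g : u ⟶ b) :
    G.Le h (G.meet f g) ↔ G.Le h f ∧ G.Le h g :=
  ⟨fun hm => ⟨le_trans hm (G.meet_le_left f g), le_trans hm (G.meet_le_right f g)⟩,
    fun ⟨hf, hg⟩ => G.le_meet f g h hf hg⟩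

theorem le_comp_meet_of_pos {u a b c : G.Obj} (β : u ⟶ a) {h : a ⟶ b} {k : a ⟶ c}
    (hh : G.Pos h) (hk : G.Pos k) : G.Le β (G.meet (β ≫ h) (β ≫ k)) :=
  (le_meet_iff _ _ _).2 ⟨(le_self_comp_iff β h).2 hh, (le_self_comp_iff β k).2 hk⟩

theorem meet_comp_le_of_coprime {u a b c : G.Obj} (β : u ⟶ a) {h : a ⟶ b} {k : a ⟶ c}
    (hcop : G.Pos (Groupoid.inv (G.meet h k))) : G.Le (G.meet (β ≫ h) (β ≫ k)) β := by
  set m := G.meet (β ≫ h) (β ≫ k)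
  have hmh : G.Le (Groupoid.inv β ≫ m) h := by
    simpa using (comp_le_comp_iff (Groupoid.inv β) m (β ≫ h)).2 (G.meet_le_left _ _)
  have hmk : G.Le (Groupoid.inv β ≫ m) k := by
    simpa using (comp_le_comp_iff (Groupoid.inv β) m (β ≫ k)).2 (G.meet_le_right _ _)
  have hm1 : G.Le (Groupoid.inv β ≫ m) (𝟙 a) :=
    le_trans ((le_meet_iff _ _ _).2 ⟨hmh, hmk⟩) (by simpa [Le] using hcop)
  simpa using (comp_le_comp_iff β _ _).2 hm1

/-- The paper's `α⁽¹⁾`. -/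
def transport (G : GarsideGroupoid) {u v : G.Obj} (y : u ⟶ u) (z : v ⟶ v) (α : u ⟶ v) :
    G.fracObj y ⟶ G.fracObj z :=
  G.fracDen y ≫ α ≫ Groupoid.inv (G.fracDen z)

variable {u v : G.Obj} {y : u ⟶ u} {z : v ⟶ v} {α : u ⟶ v}

theorem transport_comp_fracDen : G.transport y z α ≫ G.fracDen z = G.fracDen y ≫ α := by
  simp [transport]

theorem transport_comp_fracNum (hconj : Groupoid.inv α ≫ y ≫ α = z) :
    G.transport y z α ≫ G.fracNum z = G.fracNum y ≫ α := by
  have hy := G.frac_spec y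
  have hz := G.frac_spec z
  simp only [Groupoid.inv_eq_inv] at hconj hy hz
  have hnum : G.fracNum y = G.fracDen y ≫ y := by simp [hy]
  have hnum' : G.fracNum z = G.fracDen z ≫ z := by simp [hz]
  simp [transport, Groupoid.inv_eq_inv, hnum, hnum', ← hconj]

theorem transport_eq_fracNum (hconj : Groupoid.inv α ≫ y ≫ α = z) :
    G.transport y z α = G.fracNum y ≫ α ≫ Groupoid.inv (G.fracNum z) := by
  rw [← Category.assoc, ← transport_comp_fracNum hconj]
  simp

theorem transport_le_meet (hconj : Groupoid.inv α ≫ y ≫ α = z) :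
    G.Le (G.transport y z α) (G.meet (G.fracDen y ≫ α) (G.fracNum y ≫ α)) := by
  rw [← transport_comp_fracDen, ← transport_comp_fracNum hconj]
  exact le_comp_meet_of_pos _ (G.fracDen_pos z) (G.fracNum_pos z)

theorem meet_le_transport (hconj : Groupoid.inv α ≫ y ≫ α = z) :
    G.Le (G.meet (G.fracDen y ≫ α) (G.fracNum y ≫ α)) (G.transport y z α) := by
  rw [← transport_comp_fracDen, ← transport_comp_fracNum hconj]
  exact meet_comp_le_of_coprime _ (G.frac_reduced z)

theorem swMor_conj_transport (hconj : Groupoid.inv α ≫ y ≫ α = z) :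
    Groupoid.inv (G.transport y z α) ≫ G.swMor y ≫ G.transport y z α = G.swMor z := by
  have hswap : G.swMor y ≫ G.transport y z α = G.transport y z α ≫ G.swMor z := by
    calc G.swMor y ≫ G.transport y z α
        = G.fracNum y ≫ α ≫ Groupoid.inv (G.fracDen z) := by simp [swMor, transport]
      _ = (G.transport y z α ≫ G.fracNum z) ≫ Groupoid.inv (G.fracDen z) := by
        rw [transport_comp_fracNum hconj, Category.assoc]
      _ = G.transport y z α ≫ G.swMor z := by simp [swMor]
  simp [hswap]

end GarsideGroupoid

theorem transport_for_swap_general (G : GarsideGroupoid) {u v : G.Obj}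
    (y : u ⟶ u) (z : v ⟶ v) (α : u ⟶ v)
    (hconj : Groupoid.inv α ≫ y ≫ α = z) :
    G.fracDen y ≫ α ≫ Groupoid.inv (G.fracDen z) =
        G.fracNum y ≫ α ≫ Groupoid.inv (G.fracNum z) ∧
    G.Le (G.fracDen y ≫ α ≫ Groupoid.inv (G.fracDen z))
        (G.meet (G.fracDen y ≫ α) (G.fracNum y ≫ α)) ∧
    G.Le (G.meet (G.fracDen y ≫ α) (G.fracNum y ≫ α))
        (G.fracDen y ≫ α ≫ Groupoid.inv (G.fracDen z)) ∧
    Groupoid.inv (G.fracDen y ≫ α ≫ Groupoid.inv (G.fracDen z)) ≫ G.swMor y ≫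
        (G.fracDen y ≫ α ≫ Groupoid.inv (G.fracDen z)) = G.swMor z :=
  ⟨G.transport_eq_fracNum hconj, G.transport_le_meet hconj, G.meet_le_transport hconj,
    G.swMor_conj_transport hconj⟩

/-- Transport for swap: let `y ∈ G(u,u)` and `z ∈ G(v,v)` be endomorphisms conjugate by a
positive morphism `α ∈ C(u,v)`, so `y^α = z`.  Writing the reduced left-fraction
decompositions `y = f⁻¹ g` and `z = h⁻¹ k`, the transport `α⁽¹⁾ := f α h⁻¹` satisfies
`α⁽¹⁾ = f α h⁻¹ = g α k⁻¹ = (f α) ∧ (g α)` (the latter equality in the lattice sense, i.e.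
mutual divisibility with the left gcd), and `sw(y)^{α⁽¹⁾} = sw(z)`. -/
theorem transport_for_swap (G : GarsideGroupoid) {u v : G.Obj}
    (y : u ⟶ u) (z : v ⟶ v) (α : u ⟶ v) (hα : G.Pos α)
    (hconj : Groupoid.inv α ≫ y ≫ α = z) :
    G.fracDen y ≫ α ≫ Groupoid.inv (G.fracDen z) =
        G.fracNum y ≫ α ≫ Groupoid.inv (G.fracNum z) ∧
    G.Le (G.fracDen y ≫ α ≫ Groupoid.inv (G.fracDen z))
        (G.meet (G.fracDen y ≫ α) (G.fracNum y ≫ α)) ∧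
    G.Le (G.meet (G.fracDen y ≫ α) (G.fracNum y ≫ α))
        (G.fracDen y ≫ α ≫ Groupoid.inv (G.fracDen z)) ∧
    Groupoid.inv (G.fracDen y ≫ α ≫ Groupoid.inv (G.fracDen z)) ≫ G.swMor y ≫
        (G.fracDen y ≫ α ≫ Groupoid.inv (G.fracDen z)) = G.swMor z :=
  transport_for_swap_general G y z α hconj
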